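/- For every k ≥ 1, t_3(k) ≺ t_4(k+1), where t_3(k) = b·TM_{2k+1}·complement(TM_{2k})' and t_4(k) = b·TM_{2k}; consequently every one of the twelve words t_ℓ(k) (ℓ ∈ [1,12]) is lexicographically strictly smaller than every t_{ℓ'}(k+1). -/

import Mathlib

/-- Alphabet {a,b} with a = false, b = true, a < b. -/
abbrev Letter := Bool

/-- Lexicographic order (proper prefixes are smaller). -/
def lexlt (x y : List Bool) : Prop := List.Lex (· < ·) x y

/-- Fibonacci words: F 0 = b, F 1 = a, F (k+2) = F (k+1) ++ F k. -/
def Fib : ℕ → List Bool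
  | 0 => [true]
  | 1 => [false]
  | (k+2) => Fib (k+1) ++ Fib k

/-- bitwise complement -/
def comp (w : List Bool) : List Bool := w.map (fun c => !c)

/-- Thue-Morse words: TM 0 = a, TM (k+1) = TM k ++ comp (TM k). -/
def TM : ℕ → List Bool
  | 0 => [false]
  | (k+1) => TM k ++ comp (TM k)

/-- Fueled Nyldon predicate: a string of length 1 is Nyldon; a longer string is
Nyldon iff it admits no factorization into ≥ 2 Nyldon words in lexicographically
non-decreasing order. -/
def NyldonAux : ℕ → List Bool → Prop
  | 0, _ => False
  | (n+1), w =>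
    w.length = 1 ∨ (1 < w.length ∧
      ¬ ∃ fs : List (List Bool), 2 ≤ fs.length ∧ fs.flatten = w ∧
        fs.Chain' lexlt ∧ ∀ u ∈ fs, NyldonAux n u)

def Nyldon (w : List Bool) : Prop := NyldonAux w.length w

/-- H k = Fib k with its first letter removed. -/
def H (k : ℕ) : List Bool := (Fib k).tail

/-- s is the longest Nyldon proper suffix of w. -/
def IsLnps (w s : List Bool) : Prop :=
  s <:+ w ∧ s ≠ w ∧ Nyldon s ∧
    ∀ t : List Bool, t <:+ w → t ≠ w → Nyldon t → t.length ≤ s.length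

/-- Thue-Morse morphism: τ(a)=ab, τ(b)=ba. -/
def tau (w : List Bool) : List Bool :=
  w.flatMap (fun c => if c then [true, false] else [false, true])

/-- The sequence w_n: w_1=a, w_2=b, w_3=ba, w_4=baabbaa,
w_n = b·TM_{2n-8}·comp(TM_{2n-6})·comp(TM_{2n-6})' for n ≥ 5. -/
def wseq : ℕ → List Bool
  | 0 => []
  | 1 => [false]
  | 2 => [true]
  | 3 => [true, false]
  | 4 => [true, false, false, true, true, false, false]
  | (n+5) => true :: (TM (2*n+2) ++ comp (TM (2*n+4)) ++ (comp (TM (2*n+4))).dropLast)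

/-- The twelve words t_i(k). -/
def tword : ℕ → ℕ → List Bool
  | 1, k => true :: (TM (2*k+1)).dropLast
  | 2, k => true :: TM (2*k+1)
  | 3, k => true :: (TM (2*k+1) ++ (comp (TM (2*k))).dropLast)
  | 4, k => true :: TM (2*k)
  | 5, k => true :: (TM (2*k) ++ TM (2*k-1) ++ (comp (TM (2*k-2))).dropLast)
  | 6, k => true :: (TM (2*k) ++ (TM (2*k+1)).dropLast)
  | 7, k => true :: (TM (2*k) ++ TM (2*k+1))
  | 8, k => true :: (TM (2*k) ++ TM (2*k+1) ++ (comp (TM (2*k))).dropLast)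
  | 9, k => true :: (TM (2*k) ++ (comp (TM (2*k+2))).dropLast)
  | 10, k => true :: (TM (2*k) ++ comp (TM (2*k+2)))
  | 11, k => true :: (TM (2*k) ++ TM (2*k+1) ++ (comp (TM (2*k+2))).dropLast)
  | 12, k => true :: (TM (2*k) ++ comp (TM (2*k+2)) ++ (comp (TM (2*k+2))).dropLast)
  | _, _ => []

/-!
Write `T = TM_{2k}` and `C = comp T`, so that `TM_{2k+2} = T C C T`. Every `t_ℓ(k+1)` begins with
`t_4(k+1) = b T C C T`, so it suffices that every `t_ℓ(k)` precedes `b T C C T`. For `ℓ ≤ 4`,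
`t_ℓ(k)` is a proper prefix of it. Otherwise `t_ℓ(k)` agrees with it on `b T` (or on `b T C`) and
then continues with a Thue–Morse block, which starts with `a`, where `b T C C T` continues with
`C`, which starts with `b`.
-/

lemma comp_append (x y : List Bool) : comp (x ++ y) = comp x ++ comp y :=
  List.map_append

lemma comp_comp (x : List Bool) : comp (comp x) = x := by
  simp [comp, Function.comp_def]

lemma TM_succ (n : ℕ) : TM (n + 1) = TM n ++ comp (TM n) := rfl

lemma TM_add_two (n : ℕ) :
    TM (n + 2) = TM n ++ comp (TM n) ++ (comp (TM n) ++ TM n) := by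
  rw [TM_succ (n + 1), TM_succ, comp_append, comp_comp]

lemma comp_TM_add_two (n : ℕ) :
    comp (TM (n + 2)) = comp (TM n) ++ TM n ++ (TM n ++ comp (TM n)) := by
  rw [TM_add_two, comp_append, comp_append, comp_append, comp_comp]

lemma exists_TM_eq_false_cons (n : ℕ) : ∃ r, TM n = false :: r := by
  induction n with
  | zero => exact ⟨[], rfl⟩
  | succ n ih =>
    obtain ⟨r, hr⟩ := ih
    exact ⟨r ++ comp (TM n), by rw [TM_succ, hr, List.cons_append]⟩

lemma exists_comp_TM_eq_true_cons (n : ℕ) : ∃ r, comp (TM n) = true :: r := by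
  obtain ⟨r, hr⟩ := exists_TM_eq_false_cons n
  exact ⟨comp r, by rw [hr]; rfl⟩

lemma comp_TM_ne_nil (n : ℕ) : comp (TM n) ≠ [] := by
  obtain ⟨r, hr⟩ := exists_comp_TM_eq_true_cons n
  simp [hr]

lemma lexlt_append_left (p : List Bool) {x y : List Bool} (h : lexlt x y) :
    lexlt (p ++ x) (p ++ y) :=
  List.Lex.append_left _ h p

lemma lexlt.trans_prefix {x y z : List Bool} (h : lexlt x y) (hyz : y <+: z) : lexlt x z := by
  obtain ⟨t, rfl⟩ := hyz
  exact List.Lex.append_right _ t h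

lemma lexlt_append_self (x : List Bool) {y : List Bool} (hy : y ≠ []) : lexlt x (x ++ y) := by
  obtain ⟨a, y, rfl⟩ := List.exists_cons_of_ne_nil hy
  simpa using lexlt_append_left x (List.Lex.nil : lexlt [] (a :: y))

lemma lexlt_dropLast {x : List Bool} (hx : x ≠ []) : lexlt x.dropLast x := by
  conv_rhs => rw [← List.dropLast_append_getLast hx]
  exact lexlt_append_self _ (List.cons_ne_nil _ _)

lemma lexlt_TM_append_comp_TM_append (x y : List Bool) (m n : ℕ) :
    lexlt (TM m ++ x) (comp (TM n) ++ y) := by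
  obtain ⟨r, hr⟩ := exists_TM_eq_false_cons m
  obtain ⟨s, hs⟩ := exists_comp_TM_eq_true_cons n
  rw [hr, hs]
  exact List.Lex.rel (by decide)

lemma tword_lexlt_tword_four_succ (l k : ℕ) : lexlt (tword l k) (tword 4 (k + 1)) := by
  have hT1 : TM (2 * k + 1) = TM (2 * k) ++ comp (TM (2 * k)) := rfl
  have hT2 : tword 4 (k + 1) = true :: TM (2 * k + 2) := rfl
  rw [hT2, TM_add_two]
  match l with
  | 0 => exact List.Lex.nil
  | 1 =>
    exact .cons ((lexlt_dropLast (by simp [hT1, comp_TM_ne_nil])).trans_prefix ⟨_, rfl⟩)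
  | 2 => exact .cons (lexlt_append_self _ (by simp [comp_TM_ne_nil]))
  | 3 =>
    have hC := lexlt_append_left (TM (2 * k + 1)) (lexlt_dropLast (comp_TM_ne_nil (2 * k)))
    exact .cons (hC.trans_prefix ⟨TM (2 * k), by simp [hT1]⟩)
  | 4 =>
    simp only [List.append_assoc]
    exact .cons (lexlt_append_self _ (by simp [comp_TM_ne_nil]))
  | 5 | 7 | 8 | 11 =>
    simp only [tword, List.append_assoc]
    exact .cons (lexlt_append_left _ (lexlt_TM_append_comp_TM_append _ _ _ _))
  | 6 =>
    simp only [tword, hT1, List.append_assoc, List.dropLast_append_of_ne_nil (comp_TM_ne_nil _)]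
    exact .cons (lexlt_append_left _ (lexlt_TM_append_comp_TM_append _ _ _ _))
  | 9 =>
    simp only [tword, comp_TM_add_two, List.append_assoc, List.dropLast_append_of_ne_nil,
      ne_eq, List.append_eq_nil_iff, comp_TM_ne_nil, and_false, not_false_eq_true]
    exact .cons (lexlt_append_left _ (lexlt_append_left _ (lexlt_TM_append_comp_TM_append _ _ _ _)))
  | 10 | 12 =>
    simp only [tword, comp_TM_add_two, List.append_assoc]
    exact .cons (lexlt_append_left _ (lexlt_append_left _ (lexlt_TM_append_comp_TM_append _ _ _ _)))
  | _ + 13 => exact List.Lex.nil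

lemma tword_four_prefix_tword (k : ℕ) {l : ℕ} (hl : 1 ≤ l) (hl' : l ≤ 12) :
    tword 4 k <+: tword l k := by
  have hT1 : TM (2 * k + 1) = TM (2 * k) ++ comp (TM (2 * k)) := rfl
  interval_cases l <;> simp [tword, hT1, comp_TM_ne_nil]

theorem stmt19 : ∀ k : ℕ, 1 ≤ k →
    lexlt (tword 3 k) (tword 4 (k+1)) ∧
    ∀ l l' : ℕ, 1 ≤ l → l ≤ 12 → 1 ≤ l' → l' ≤ 12 →
      lexlt (tword l k) (tword l' (k+1)) :=
  fun k _ => ⟨tword_lexlt_tword_four_succ 3 k, fun l _ _ _ hl' hl'' =>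
    (tword_lexlt_tword_four_succ l k).trans_prefix (tword_four_prefix_tword (k + 1) hl' hl'')⟩
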